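/- Refined dissipation inequality, incompressible case (Remark (i), Section 2.5): Let n ≥ 1, let D ∈ ℝⁿˣⁿ be symmetric with tr D = 0, let d ∈ ℝⁿ with |d| = 1, and let μ_s, μ_L, μ_0 ∈ ℝ satisfy μ_s ≥ 0, 2μ_s + μ_L ≥ 0 and 2μ_s + μ_0 ≥ 0. Then 2μ_s‖D‖² + μ_L|P_dDd|² + μ_0⟨Dd,d⟩² ≥ 0. -/

import Mathlib

/-
With `a = D d` and `t = ⟨a, d⟩`, Pythagoras gives `|P_d a|² = |a|² - t²`, and row-wise
Cauchy–Schwarz gives `|a|² ≤ ‖D‖²` for unit `d`. Hence the left-hand side is at least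
`2μ_s |a|² + μ_L (|a|² - t²) + μ₀ t² = (2μ_s + μ_L)(|a|² - t²) + (2μ_s + μ₀) t² ≥ 0`.
-/

open scoped BigOperators
open Matrix

/-- Euclidean inner product on `Fin n → ℝ`. -/
def dotv {n : ℕ} (a b : Fin n → ℝ) : ℝ := ∑ i, a i * b i

/-- Frobenius product `A : B = Σᵢⱼ Aᵢⱼ Bᵢⱼ` of two matrices. -/
def frob {n : ℕ} (A B : Matrix (Fin n) (Fin n) ℝ) : ℝ := ∑ i, ∑ j, A i j * B i j

lemma dotv_eq_dotProduct {n : ℕ} (a b : Fin n → ℝ) : dotv a b = a ⬝ᵥ b := rfl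

lemma dotv_comm {n : ℕ} (a b : Fin n → ℝ) : dotv a b = dotv b a := by
  simp only [dotv_eq_dotProduct, dotProduct_comm]

lemma dotv_self_nonneg {n : ℕ} (a : Fin n → ℝ) : 0 ≤ dotv a a :=
  Finset.sum_nonneg fun i _ => mul_self_nonneg (a i)

lemma dotv_sub_smul_self_of_unit {n : ℕ} {d : Fin n → ℝ} (hd : dotv d d = 1) (v : Fin n → ℝ) :
    dotv (v - dotv d v • d) (v - dotv d v • d) = dotv v v - dotv d v ^ 2 := by
  simp only [dotv_eq_dotProduct] at hd ⊢
  simp only [sub_dotProduct, dotProduct_sub, smul_dotProduct, dotProduct_smul, smul_eq_mul, hd,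
    dotProduct_comm v d]
  ring

lemma dotv_mulVec_self_le_frob_mul {n : ℕ} (D : Matrix (Fin n) (Fin n) ℝ) (d : Fin n → ℝ) :
    dotv (D *ᵥ d) (D *ᵥ d) ≤ frob D D * dotv d d := by
  simp only [dotv, frob, ← sq]
  rw [Finset.sum_mul]
  gcongr with i
  exact Finset.sum_mul_sq_le_sq_mul_sq Finset.univ (D i) d

lemma two_mul_add_mul_sub_add_mul_sq_nonneg {μs μL μ₀ F A t : ℝ} (hμs : 0 ≤ μs)
    (hμL : 0 ≤ 2 * μs + μL) (hμ₀ : 0 ≤ 2 * μs + μ₀) (htA : t ^ 2 ≤ A) (hAF : A ≤ F) :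
    0 ≤ 2 * μs * F + μL * (A - t ^ 2) + μ₀ * t ^ 2 :=
  calc 0 ≤ (2 * μs + μL) * (A - t ^ 2) + (2 * μs + μ₀) * t ^ 2 := by
        have := sub_nonneg.mpr htA
        positivity
    _ = 2 * μs * A + μL * (A - t ^ 2) + μ₀ * t ^ 2 := by ring
    _ ≤ 2 * μs * F + μL * (A - t ^ 2) + μ₀ * t ^ 2 := by gcongr

theorem refined_dissipation_incompressible_general {n : ℕ}
    (D : Matrix (Fin n) (Fin n) ℝ)
    (d : Fin n → ℝ) (hd : dotv d d = 1)
    (μs μL μ₀ : ℝ) (hμs : 0 ≤ μs) (hμL : 0 ≤ 2*μs + μL) (hμ₀ : 0 ≤ 2*μs + μ₀)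
    (Pd : (Fin n → ℝ) → (Fin n → ℝ)) (hPd : Pd = fun v => v - (dotv d v) • d) :
    0 ≤ 2*μs * frob D D
        + μL * dotv (Pd (D.mulVec d)) (Pd (D.mulVec d))
        + μ₀ * (dotv (D.mulVec d) d)^2 := by
  subst hPd
  have hpyth := dotv_sub_smul_self_of_unit hd (D *ᵥ d)
  have hsq_le : dotv d (D *ᵥ d) ^ 2 ≤ dotv (D *ᵥ d) (D *ᵥ d) := by
    rw [← sub_nonneg, ← hpyth]
    exact dotv_self_nonneg _
  have hle_frob : dotv (D *ᵥ d) (D *ᵥ d) ≤ frob D D := by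
    simpa only [hd, mul_one] using dotv_mulVec_self_le_frob_mul D d
  rw [hpyth, dotv_comm (D *ᵥ d) d]
  exact two_mul_add_mul_sub_add_mul_sq_nonneg hμs hμL hμ₀ hsq_le hle_frob

/-- Refined dissipation inequality in the incompressible case: for symmetric trace-free `D`,
unit `d`, and `μ_s ≥ 0`, `2μ_s + μ_L ≥ 0`, `2μ_s + μ₀ ≥ 0`,
`2μ_s‖D‖² + μ_L|P_dDd|² + μ₀⟨Dd,d⟩² ≥ 0`. -/
theorem refined_dissipation_incompressible {n : ℕ} (hn : 1 ≤ n)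
    (D : Matrix (Fin n) (Fin n) ℝ) (hDsymm : Dᵀ = D) (hDtr : Matrix.trace D = 0)
    (d : Fin n → ℝ) (hd : dotv d d = 1)
    (μs μL μ₀ : ℝ) (hμs : 0 ≤ μs) (hμL : 0 ≤ 2*μs + μL) (hμ₀ : 0 ≤ 2*μs + μ₀)
    (Pd : (Fin n → ℝ) → (Fin n → ℝ)) (hPd : Pd = fun v => v - (dotv d v) • d) :
    0 ≤ 2*μs * frob D D
        + μL * dotv (Pd (D.mulVec d)) (Pd (D.mulVec d))
        + μ₀ * (dotv (D.mulVec d) d)^2 :=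
  refined_dissipation_incompressible_general D d hd μs μL μ₀ hμs hμL hμ₀ Pd hPd
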